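/- arXiv:2007.03910 — 6 statements merged into one kernel-verified Lean document; each statement's English description precedes it below -/
import Mathlib

section
/- In the symmetric case of the deterministic limit of the zealot model with reinforcement (n₁ = n₂ = n > 0, ϑ₁ = ϑ₂ = ϑ > 0, μ > 0), the derivative of the drift at the midpoint equals F_{n,ϑ}'(1/2) = −2μϑ·((2n+1)ϑ + (2n−1)) / ((2n+1)(ϑ+1)²). -/
/-- The symmetric deterministic-limit drift of the zealot model with
reinforcement: `F_{n,ϑ}(x)` with rethinking rate `μ`, zealot ratio `n`,
and reinforcement weight `ϑ`. -/
noncomputable def Fsym (μ n ϑ x : ℝ) : ℝ :=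
  μ * (1 - x) * (ϑ * (x + n)) / (ϑ * (x + n) + (1 - x + n))
    - μ * x * (ϑ * (1 - x + n)) / ((x + n) + ϑ * (1 - x + n))

/-- In the symmetric case (`n₁ = n₂ = n > 0`, `ϑ₁ = ϑ₂ = ϑ > 0`, `μ > 0`),
the derivative of the drift at the midpoint equals
`F_{n,ϑ}'(1/2) = −2μϑ((2n+1)ϑ + (2n−1)) / ((2n+1)(ϑ+1)²)`. -/
theorem deriv_drift_at_midpoint (μ n ϑ : ℝ) (hμ : 0 < μ) (hn : 0 < n) (hϑ : 0 < ϑ) :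
    deriv (Fsym μ n ϑ) (1 / 2)
      = -2 * μ * ϑ * ((2 * n + 1) * ϑ + (2 * n - 1)) / ((2 * n + 1) * (ϑ + 1) ^ 2) := by
  set x₀ : ℝ := 1 / 2
  have hd1 : ϑ * (x₀ + n) + (1 - x₀ + n) ≠ 0 := by
    have h1 : (0:ℝ) < x₀ + n := by norm_num [x₀]; linarith
    have h2 : (0:ℝ) < 1 - x₀ + n := by norm_num [x₀]; linarith
    nlinarith [mul_pos hϑ h1]
  have hd2 : (x₀ + n) + ϑ * (1 - x₀ + n) ≠ 0 := by
    have h1 : (0:ℝ) < x₀ + n := by norm_num [x₀]; linarith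
    have h2 : (0:ℝ) < 1 - x₀ + n := by norm_num [x₀]; linarith
    nlinarith [mul_pos hϑ h2]
  have hA : HasDerivAt (fun x : ℝ => μ * (1 - x)) (μ * (-1)) x₀ := by
    simpa using (((hasDerivAt_id x₀).const_sub 1).const_mul μ)
  have hB : HasDerivAt (fun x : ℝ => ϑ * (x + n)) (ϑ * 1) x₀ := by
    simpa using (((hasDerivAt_id x₀).add_const n).const_mul ϑ)
  have hC : HasDerivAt (fun x : ℝ => 1 - x + n) (-1) x₀ := by
    simpa using (((hasDerivAt_id x₀).const_sub 1).add_const n)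
  have hD : HasDerivAt (fun x : ℝ => ϑ * (1 - x + n)) (ϑ * (-1)) x₀ := hC.const_mul ϑ
  have hE : HasDerivAt (fun x : ℝ => μ * x) μ x₀ := by
    simpa using ((hasDerivAt_id x₀).const_mul μ)
  have hG : HasDerivAt (fun x : ℝ => x + n) 1 x₀ := (hasDerivAt_id x₀).add_const n
  have hq1 : HasDerivAt
      (fun x : ℝ => μ * (1 - x) * (ϑ * (x + n)) / (ϑ * (x + n) + (1 - x + n)))
      (((μ * (-1) * (ϑ * (x₀ + n)) + μ * (1 - x₀) * (ϑ * 1)) * (ϑ * (x₀ + n) + (1 - x₀ + n))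
        - μ * (1 - x₀) * (ϑ * (x₀ + n)) * (ϑ * 1 + -1)) / (ϑ * (x₀ + n) + (1 - x₀ + n)) ^ 2)
      x₀ := (hA.mul hB).div (hB.add hC) hd1
  have hq2 : HasDerivAt
      (fun x : ℝ => μ * x * (ϑ * (1 - x + n)) / ((x + n) + ϑ * (1 - x + n)))
      (((μ * (ϑ * (1 - x₀ + n)) + μ * x₀ * (ϑ * (-1))) * ((x₀ + n) + ϑ * (1 - x₀ + n))
        - μ * x₀ * (ϑ * (1 - x₀ + n)) * (1 + ϑ * (-1))) / ((x₀ + n) + ϑ * (1 - x₀ + n)) ^ 2)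
      x₀ := (hE.mul hD).div (hG.add hD) hd2
  have hF : HasDerivAt (Fsym μ n ϑ) _ x₀ := hq1.sub hq2
  rw [hF.deriv]
  have hx : x₀ = 1 / 2 := rfl
  have h2n : (2 * n + 1) ≠ 0 := by positivity
  have hϑ1 : (ϑ + 1) ≠ 0 := by positivity
  have hd1' : ϑ * (x₀ + n) + (1 - x₀ + n) = (1/2 + n) * (ϑ + 1) := by
    rw [hx]; ring
  have hd2' : (x₀ + n) + ϑ * (1 - x₀ + n) = (1/2 + n) * (ϑ + 1) := by
    rw [hx]; ring
  rw [hd1', hd2', hx]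
  have h12n : (1/2 + n : ℝ) ≠ 0 := by positivity
  field_simp
  ring
end

section
/- In the symmetric case of the deterministic limit of the zealot model with reinforcement, with μ > 0, n ∈ (0, 1/2) and ϑ ∈ (0, 1), the linearization at the midpoint vanishes exactly at the pitchfork bifurcation value: F_{n,ϑ}'(1/2) = 0 if and only if ϑ = ϑ_p := (1−2n)/(1+2n). -/
/-!
The drift is antisymmetric about the midpoint: `F(x) = G(x) - G(1 - x)`, where
`G = adoptionRate` is the rate at which free voters of opinion 2 switch to opinion 1.
Hence `F'(1/2) = 2 G'(1/2)`, and a quotient-rule computation gives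
`G'(1/2) = μϑ((1 - 2n) - (1 + 2n)ϑ) / ((ϑ + 1)² (1 + 2n))`, whose sign is that of `ϑ_p - ϑ`.
-/

noncomputable def adoptionRate (μ n ϑ x : ℝ) : ℝ :=
  μ * (1 - x) * (ϑ * (x + n)) / (ϑ * (x + n) + (1 - x + n))

theorem Fsym_eq_sub_adoptionRate_reflect (μ n ϑ : ℝ) :
    Fsym μ n ϑ = fun x => adoptionRate μ n ϑ x - adoptionRate μ n ϑ (1 - x) := by
  funext x
  simp only [Fsym, adoptionRate, sub_sub_cancel]
  ring

theorem HasDerivAt.sub_comp_reflect {g : ℝ → ℝ} {g' a : ℝ} (h : HasDerivAt g g' (a / 2)) :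
    HasDerivAt (fun x => g x - g (a - x)) (2 * g') (a / 2) := by
  have hreflect : HasDerivAt (fun x => a - x) (-1) (a / 2) := by
    simpa using (hasDerivAt_id (a / 2)).const_sub a
  have hcomp : HasDerivAt (fun x => g (a - x)) (g' * -1) (a / 2) := by
    have h' : HasDerivAt g g' (a - a / 2) := by rwa [sub_half]
    exact h'.comp (a / 2) hreflect
  exact (h.sub hcomp).congr_deriv (by ring)

theorem hasDerivAt_adoptionRate_half (μ n ϑ : ℝ) (hϑ : ϑ + 1 ≠ 0) (hn : 1 + 2 * n ≠ 0) :
    HasDerivAt (adoptionRate μ n ϑ)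
      (μ * ϑ / ((ϑ + 1) ^ 2 * (1 + 2 * n)) * ((1 - 2 * n) - (1 + 2 * n) * ϑ)) (1 / 2) := by
  have hnum : HasDerivAt (fun x => μ * (1 - x) * (ϑ * (x + n)))
      (μ * -1 * (ϑ * (1 / 2 + n)) + μ * (1 - 1 / 2) * (ϑ * 1)) (1 / 2) :=
    (((hasDerivAt_id _).const_sub 1).const_mul μ).mul
      (((hasDerivAt_id _).add_const n).const_mul ϑ)
  have hden : HasDerivAt (fun x => ϑ * (x + n) + (1 - x + n)) (ϑ * 1 + -1) (1 / 2) :=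
    (((hasDerivAt_id _).add_const n).const_mul ϑ).add (((hasDerivAt_id _).const_sub 1).add_const n)
  have hden_half : ϑ * (1 / 2 + n) + (1 - 1 / 2 + n) = (ϑ + 1) * (1 + 2 * n) / 2 := by ring
  have hden_ne : ϑ * (1 / 2 + n) + (1 - 1 / 2 + n) ≠ 0 := by
    rw [hden_half]
    positivity
  refine (hnum.div hden hden_ne).congr_deriv ?_
  rw [hden_half]
  field_simp
  ring

/-- With `μ > 0`, `n ∈ (0, 1/2)` and `ϑ ∈ (0, 1)`, the linearization of the
symmetric drift at the midpoint vanishes exactly at the pitchfork bifurcation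
value: `F_{n,ϑ}'(1/2) = 0 ↔ ϑ = (1−2n)/(1+2n)`. -/
theorem deriv_zero_iff_pitchfork (μ n ϑ : ℝ) (hμ : 0 < μ)
    (hn : n ∈ Set.Ioo (0 : ℝ) (1 / 2)) (hϑ : ϑ ∈ Set.Ioo (0 : ℝ) 1) :
    deriv (Fsym μ n ϑ) (1 / 2) = 0 ↔ ϑ = (1 - 2 * n) / (1 + 2 * n) := by
  obtain ⟨hn0, -⟩ := hn
  obtain ⟨hϑ0, -⟩ := hϑ
  have hϑ1 : 0 < ϑ + 1 := by linarith
  have hn1 : 0 < 1 + 2 * n := by linarith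
  have hF := (hasDerivAt_adoptionRate_half μ n ϑ hϑ1.ne' hn1.ne').sub_comp_reflect
  have hscale : μ * ϑ / ((ϑ + 1) ^ 2 * (1 + 2 * n)) ≠ 0 := by positivity
  rw [Fsym_eq_sub_adoptionRate_reflect, hF.deriv, mul_eq_zero_iff_left two_ne_zero,
    mul_eq_zero_iff_left hscale, eq_div_iff hn1.ne']
  constructor <;> intro h <;> linarith
end

section
/- In the symmetric case of the deterministic limit of the zealot model with reinforcement, with μ > 0, n ∈ (0, 1/2) and ϑ ∈ (0, 1], the midpoint stationary point x = 1/2 is linearly stable exactly above the bifurcation value: F_{n,ϑ}'(1/2) < 0 if and only if ϑ > ϑ_p := (1−2n)/(1+2n), and F_{n,ϑ}'(1/2) > 0 if and only if ϑ < ϑ_p. -/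
/-- With `μ > 0`, `n ∈ (0, 1/2)` and `ϑ ∈ (0, 1]`, the midpoint stationary point
`x = 1/2` is linearly stable exactly above the pitchfork bifurcation value
`ϑ_p = (1−2n)/(1+2n)`: `F_{n,ϑ}'(1/2) < 0 ↔ ϑ > ϑ_p`, and
`F_{n,ϑ}'(1/2) > 0 ↔ ϑ < ϑ_p`. -/
theorem midpoint_stability_iff (μ n ϑ : ℝ) (hμ : 0 < μ)
    (hn : n ∈ Set.Ioo (0 : ℝ) (1 / 2)) (hϑ : ϑ ∈ Set.Ioc (0 : ℝ) 1) :
    (deriv (Fsym μ n ϑ) (1 / 2) < 0 ↔ (1 - 2 * n) / (1 + 2 * n) < ϑ) ∧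
    (0 < deriv (Fsym μ n ϑ) (1 / 2) ↔ ϑ < (1 - 2 * n) / (1 + 2 * n)) := by
  obtain ⟨hn0, hn2⟩ := hn
  obtain ⟨hϑ0, hϑ1⟩ := hϑ
  set c : ℝ := (1 : ℝ) / 2
  have hs : (0 : ℝ) < c + n := by positivity
  have h1ϑ : (0 : ℝ) < 1 + ϑ := by linarith
  -- derivatives of building blocks at c
  have h1x : HasDerivAt (fun x : ℝ => 1 - x) (-1) c := by
    simpa using (hasDerivAt_id c).const_sub 1
  have hxn : HasDerivAt (fun x : ℝ => x + n) 1 c := (hasDerivAt_id c).add_const n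
  have ha : HasDerivAt (fun x : ℝ => ϑ * (x + n)) (ϑ * 1) c := hxn.const_mul ϑ
  have hb : HasDerivAt (fun x : ℝ => 1 - x + n) (-1) c := h1x.add_const n
  have hbϑ : HasDerivAt (fun x : ℝ => ϑ * (1 - x + n)) (ϑ * (-1)) c := hb.const_mul ϑ
  have hμ1x : HasDerivAt (fun x : ℝ => μ * (1 - x)) (μ * (-1)) c := h1x.const_mul μ
  have hμx : HasDerivAt (fun x : ℝ => μ * x) μ c := by
    simpa using (hasDerivAt_id c).const_mul μ
  have hN1 : HasDerivAt (fun x : ℝ => μ * (1 - x) * (ϑ * (x + n)))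
      (μ * (-1) * (ϑ * (c + n)) + μ * (1 - c) * (ϑ * 1)) c := hμ1x.mul ha
  have hN2 : HasDerivAt (fun x : ℝ => μ * x * (ϑ * (1 - x + n)))
      (μ * (ϑ * (1 - c + n)) + μ * c * (ϑ * (-1))) c := hμx.mul hbϑ
  have hD1 : HasDerivAt (fun x : ℝ => ϑ * (x + n) + (1 - x + n)) (ϑ * 1 + -1) c := ha.add hb
  have hD2 : HasDerivAt (fun x : ℝ => (x + n) + ϑ * (1 - x + n)) (1 + ϑ * (-1)) c :=
    hxn.add hbϑ
  have hc : (1 : ℝ) - c + n = c + n := by norm_num [c]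
  have hD1ne : ϑ * (c + n) + (1 - c + n) ≠ 0 := by
    rw [hc]; nlinarith
  have hD2ne : (c + n) + ϑ * (1 - c + n) ≠ 0 := by
    rw [hc]; nlinarith
  have hq1 := hN1.div hD1 hD1ne
  have hq2 := hN2.div hD2 hD2ne
  have hF : HasDerivAt (Fsym μ n ϑ)
      (((μ * (-1) * (ϑ * (c + n)) + μ * (1 - c) * (ϑ * 1)) * (ϑ * (c + n) + (1 - c + n))
          - μ * (1 - c) * (ϑ * (c + n)) * (ϑ * 1 + -1)) / (ϑ * (c + n) + (1 - c + n)) ^ 2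
        - ((μ * (ϑ * (1 - c + n)) + μ * c * (ϑ * (-1))) * ((c + n) + ϑ * (1 - c + n))
          - μ * c * (ϑ * (1 - c + n)) * (1 + ϑ * (-1))) / ((c + n) + ϑ * (1 - c + n)) ^ 2) c :=
    hq1.sub hq2
  have hderiv : deriv (Fsym μ n ϑ) c
      = μ * ϑ * ((1 - 2 * n) - ϑ * (1 + 2 * n)) / ((1 + ϑ) ^ 2 * (c + n)) := by
    rw [hF.deriv, hc]
    have h1 : ϑ * (c + n) + (c + n) = (1 + ϑ) * (c + n) := by ring
    have h2 : (c + n) + ϑ * (c + n) = (1 + ϑ) * (c + n) := by ring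
    rw [h1, h2]
    have hne : ((1 + ϑ) * (c + n)) ≠ 0 := by positivity
    have hne2 : ((1 + ϑ) ^ 2 * (c + n)) ≠ 0 := by positivity
    field_simp
    show _ = _
    have : c = 1/2 := rfl
    rw [this]; ring
  have hden : (0 : ℝ) < (1 + ϑ) ^ 2 * (c + n) := by positivity
  have hμϑ : (0 : ℝ) < μ * ϑ := by positivity
  have h12n : (0 : ℝ) < 1 + 2 * n := by linarith
  constructor
  · rw [hderiv, div_neg_iff, div_lt_iff₀ h12n]
    constructor
    · rintro (⟨-, h⟩ | ⟨h, -⟩)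
      · linarith
      · nlinarith
    · intro h
      right
      exact ⟨by nlinarith, hden⟩
  · rw [hderiv, div_pos_iff, lt_div_iff₀ h12n]
    constructor
    · rintro (⟨h, -⟩ | ⟨-, h⟩)
      · nlinarith
      · linarith
    · intro h
      left
      exact ⟨by nlinarith, hden⟩
end

section
/- In the symmetric case of the deterministic limit of the zealot model with reinforcement, with μ > 0, n ∈ (0, 1/2), and ϑ ∈ (0, ϑ_p) where ϑ_p = (1−2n)/(1+2n), there exists a stationary point strictly between 0 and 1/2: there is an x ∈ (0, 1/2) with F_{n,ϑ}(x) = 0 (and by the odd symmetry of F_{n,ϑ} about 1/2, also F_{n,ϑ}(1−x) = 0), so below the bifurcation value the ODE has at least three stationary points in (0,1). -/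
open Set

noncomputable def stationaryQuadratic (n ϑ x : ℝ) : ℝ :=
  (1 - ϑ) * (1 - 2 * x) ^ 2 + (1 + 2 * n) ^ 2 * (1 + ϑ) - 2 * (1 + 2 * n)

theorem Fsym_one_sub (μ n ϑ x : ℝ) : Fsym μ n ϑ (1 - x) = -Fsym μ n ϑ x := by
  simp only [Fsym, sub_sub_cancel]
  rw [add_comm (ϑ * (1 - x + n))]
  ring

theorem Fsym_eq_mul_stationaryQuadratic_div (μ n ϑ x : ℝ)
    (h₁ : ϑ * (x + n) + (1 - x + n) ≠ 0) (h₂ : (x + n) + ϑ * (1 - x + n) ≠ 0) :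
    Fsym μ n ϑ x = μ * ϑ * (1 - 2 * x) / 4 * stationaryQuadratic n ϑ x
      / ((ϑ * (x + n) + (1 - x + n)) * ((x + n) + ϑ * (1 - x + n))) := by
  rw [Fsym, div_sub_div _ _ h₁ h₂, stationaryQuadratic]
  ring

theorem Fsym_eq_zero_of_stationaryQuadratic_eq_zero (μ n ϑ x : ℝ) (hϑ : 0 ≤ ϑ)
    (ha : 0 < x + n) (hb : 0 < 1 - x + n) (hx : stationaryQuadratic n ϑ x = 0) :
    Fsym μ n ϑ x = 0 := by
  rw [Fsym_eq_mul_stationaryQuadratic_div μ n ϑ x (by positivity) (by positivity), hx,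
    mul_zero, zero_div]

theorem exists_mem_Ioo_sq_one_sub_two_mul_eq {A : ℝ} (h₀ : 0 < A) (h₁ : A < 1) :
    ∃ x ∈ Ioo (0 : ℝ) (1 / 2), (1 - 2 * x) ^ 2 = A := by
  have hroot₀ : 0 < √A := Real.sqrt_pos.mpr h₀
  have hroot₁ : √A < 1 := (Real.sqrt_lt' one_pos).mpr (by rwa [one_pow])
  refine ⟨(1 - √A) / 2, ⟨by linarith, by linarith⟩, ?_⟩
  rw [show 1 - 2 * ((1 - √A) / 2) = √A by ring, Real.sq_sqrt h₀.le]

theorem exists_stationaryQuadratic_eq_zero {n ϑ : ℝ} (hn : 0 < n)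
    (hϑ : ϑ ∈ Ioo (0 : ℝ) ((1 - 2 * n) / (1 + 2 * n))) :
    ∃ x ∈ Ioo (0 : ℝ) (1 / 2), stationaryQuadratic n ϑ x = 0 := by
  obtain ⟨hϑ₀, hϑp⟩ := hϑ
  have hϑp' : ϑ * (1 + 2 * n) < 1 - 2 * n := (lt_div_iff₀ (by linarith)).mp hϑp
  have hϑ₁ : 0 < 1 - ϑ := by nlinarith
  -- `(1 + 2n)(1 + ϑ) < 2` is a restatement of `ϑ < ϑ_p`
  have hnum₀ : 0 < 2 * (1 + 2 * n) - (1 + 2 * n) ^ 2 * (1 + ϑ) := by nlinarith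
  -- the gap is `(2n)² + ϑ((1 + 2n)² - 1)`
  have hnum₁ : 2 * (1 + 2 * n) - (1 + 2 * n) ^ 2 * (1 + ϑ) < 1 - ϑ := by
    nlinarith [mul_pos hϑ₀ hn, mul_pos hn hn]
  obtain ⟨x, hx, hsq⟩ := exists_mem_Ioo_sq_one_sub_two_mul_eq (div_pos hnum₀ hϑ₁)
    ((div_lt_one hϑ₁).mpr hnum₁)
  refine ⟨x, hx, ?_⟩
  rw [stationaryQuadratic, hsq, mul_div_cancel₀ _ hϑ₁.ne']
  ring

theorem exists_stationary_below_bifurcation_general (μ n ϑ : ℝ)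
    (hn : n ∈ Set.Ioo (0 : ℝ) (1 / 2))
    (hϑ : ϑ ∈ Set.Ioo (0 : ℝ) ((1 - 2 * n) / (1 + 2 * n))) :
    ∃ x ∈ Set.Ioo (0 : ℝ) (1 / 2), Fsym μ n ϑ x = 0 ∧ Fsym μ n ϑ (1 - x) = 0 := by
  obtain ⟨x, hx, hQ⟩ := exists_stationaryQuadratic_eq_zero hn.1 hϑ
  have hFx : Fsym μ n ϑ x = 0 :=
    Fsym_eq_zero_of_stationaryQuadratic_eq_zero μ n ϑ x hϑ.1.le
      (by linarith [hx.1, hn.1]) (by linarith [hx.2, hn.1]) hQ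
  exact ⟨x, hx, hFx, by rw [Fsym_one_sub, hFx, neg_zero]⟩

/-- With `μ > 0`, `n ∈ (0, 1/2)` and `ϑ ∈ (0, ϑ_p)` where
`ϑ_p = (1−2n)/(1+2n)`, there exists a stationary point strictly between `0`
and `1/2`: some `x ∈ (0, 1/2)` with `F_{n,ϑ}(x) = 0`, and by odd symmetry also
`F_{n,ϑ}(1−x) = 0` — so below the bifurcation value the ODE has at least three
stationary points in `(0,1)`. -/
theorem exists_stationary_below_bifurcation (μ n ϑ : ℝ) (hμ : 0 < μ)
    (hn : n ∈ Set.Ioo (0 : ℝ) (1 / 2))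
    (hϑ : ϑ ∈ Set.Ioo (0 : ℝ) ((1 - 2 * n) / (1 + 2 * n))) :
    ∃ x ∈ Set.Ioo (0 : ℝ) (1 / 2), Fsym μ n ϑ x = 0 ∧ Fsym μ n ϑ (1 - x) = 0 :=
  exists_stationary_below_bifurcation_general μ n ϑ hn hϑ
end

section
/- In the weak-effects scaling of the zealot model with reinforcement, for every fixed x ∈ (0, 1), μ > 0, θ₁, θ₂ ≥ 0 and N₁, N₂ > 0, the net drift satisfies, as h → 0⁺, f₊^h(x) − f₋^h(x) = μ·h·( ((θ₁+θ₂)x − θ₁)·x·(1−x) − (N₁+N₂)x + N₁ ) + O(h²); that is, the function h ↦ f₊^h(x) − f₋^h(x) − μh(((θ₁+θ₂)x−θ₁)x(1−x) − (N₁+N₂)x + N₁) is O(h²) as h tends to 0 from the right. -/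
open Asymptotics Filter

/-- Scaled upward jump rate of the zealot model with reinforcement in the
weak-effects scaling, `h = 1/N`. -/
noncomputable def fplus (μ θ₁ θ₂ N₁ N₂ h x : ℝ) : ℝ :=
  μ * (1 - x) * ((1 - h * θ₁) * (x + h * N₁)) /
    ((1 - h * θ₁) * (x + h * N₁) + (1 - x + h * N₂))

/-- Scaled downward jump rate of the zealot model with reinforcement in the
weak-effects scaling, `h = 1/N`. -/
noncomputable def fminus (μ θ₁ θ₂ N₁ N₂ h x : ℝ) : ℝ :=
  μ * x * ((1 - h * θ₂) * (1 - x + h * N₂)) /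
    ((x + h * N₁) + (1 - h * θ₂) * (1 - x + h * N₂))

open Topology

/-!
Both rates are quotients of quadratic polynomials in `h` whose denominators equal `1` at `h = 0`,
so each has a first-order expansion with an `O(h²)` remainder; the zeroth-order terms
`μ x (1 - x)` of the two rates cancel and the first-order terms combine into the stated drift.
-/

/-- The remainder is `h² R(h) / D(h)` with `R` polynomial and `D(0) = 1`. -/
theorem isBigO_quadratic_div_quadratic_sub_linear (p₀ p₁ p₂ d₁ d₂ : ℝ) :
    (fun h : ℝ => (p₀ + p₁ * h + p₂ * h ^ 2) / (1 + d₁ * h + d₂ * h ^ 2)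
        - (p₀ + (p₁ - p₀ * d₁) * h)) =O[𝓝 0] (fun h => h ^ 2) := by
  set D : ℝ → ℝ := fun h => 1 + d₁ * h + d₂ * h ^ 2
  set R : ℝ → ℝ := fun h =>
    p₂ - d₁ * (p₁ - p₀ * d₁) - d₂ * (p₀ + (p₁ - p₀ * d₁) * h)
  have hD_cont : Continuous D := by fun_prop
  have hD_zero : D 0 = 1 := by simp [D]
  have hD_ne : ∀ᶠ h in 𝓝 0, D h ≠ 0 :=
    hD_cont.continuousAt.eventually_ne (by rw [hD_zero]; exact one_ne_zero)
  have hRD_bdd : (fun h => R h / D h) =O[𝓝 0] (fun _ => (1 : ℝ)) :=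
    ((Continuous.continuousAt (by fun_prop)).div hD_cont.continuousAt
      (by rw [hD_zero]; exact one_ne_zero)).tendsto.isBigO_one ℝ
  have h_eq : (fun h : ℝ => (p₀ + p₁ * h + p₂ * h ^ 2) / D h - (p₀ + (p₁ - p₀ * d₁) * h))
      =ᶠ[𝓝 0] fun h => h ^ 2 * (R h / D h) := by
    filter_upwards [hD_ne] with h hh
    field_simp
    ring
  simpa using h_eq.trans_isBigO ((isBigO_refl (fun h : ℝ => h ^ 2) _).mul hRD_bdd)

theorem isBigO_fplus_sub_linear (μ θ₁ θ₂ N₁ N₂ x : ℝ) :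
    (fun h : ℝ => fplus μ θ₁ θ₂ N₁ N₂ h x
        - (μ * (1 - x) * x + μ * (1 - x) * (N₁ - θ₁ * x - x * (N₁ + N₂ - θ₁ * x)) * h))
      =O[𝓝 0] (fun h => h ^ 2) := by
  refine (isBigO_quadratic_div_quadratic_sub_linear (μ * (1 - x) * x)
    (μ * (1 - x) * (N₁ - θ₁ * x)) (-(μ * (1 - x) * θ₁ * N₁)) (N₁ + N₂ - θ₁ * x)
    (-(θ₁ * N₁))).congr_left fun h => ?_
  rw [fplus]
  congr 1
  · congr 1 <;> ring
  · ring

theorem isBigO_fminus_sub_linear (μ θ₁ θ₂ N₁ N₂ x : ℝ) :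
    (fun h : ℝ => fminus μ θ₁ θ₂ N₁ N₂ h x
        - (μ * x * (1 - x) + μ * x * (N₂ - θ₂ * (1 - x) - (1 - x) * (N₁ + N₂ - θ₂ * (1 - x))) * h))
      =O[𝓝 0] (fun h => h ^ 2) := by
  refine (isBigO_quadratic_div_quadratic_sub_linear (μ * x * (1 - x))
    (μ * x * (N₂ - θ₂ * (1 - x))) (-(μ * x * θ₂ * N₂)) (N₁ + N₂ - θ₂ * (1 - x))
    (-(θ₂ * N₂))).congr_left fun h => ?_
  rw [fminus]
  congr 1
  · congr 1 <;> ring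
  · ring

theorem net_drift_weak_effects_expansion_general (μ θ₁ θ₂ N₁ N₂ x : ℝ) :
    (fun h : ℝ => fplus μ θ₁ θ₂ N₁ N₂ h x - fminus μ θ₁ θ₂ N₁ N₂ h x
        - μ * h * (((θ₁ + θ₂) * x - θ₁) * x * (1 - x) - (N₁ + N₂) * x + N₁))
      =O[nhdsWithin 0 (Set.Ioi 0)] (fun h : ℝ => h ^ 2) :=
  ((isBigO_fplus_sub_linear μ θ₁ θ₂ N₁ N₂ x).sub
      (isBigO_fminus_sub_linear μ θ₁ θ₂ N₁ N₂ x)).mono nhdsWithin_le_nhds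
    |>.congr_left fun h => by ring

/-- Weak-effects expansion of the net drift: for fixed `x ∈ (0,1)`, `μ > 0`,
`θ₁, θ₂ ≥ 0` and `N₁, N₂ > 0`, as `h → 0⁺`,
`f₊ʰ(x) − f₋ʰ(x) = μh(((θ₁+θ₂)x − θ₁)x(1−x) − (N₁+N₂)x + N₁) + O(h²)`. -/
theorem net_drift_weak_effects_expansion (μ θ₁ θ₂ N₁ N₂ x : ℝ)
    (hx : x ∈ Set.Ioo (0 : ℝ) 1) (hμ : 0 < μ) (hθ₁ : 0 ≤ θ₁) (hθ₂ : 0 ≤ θ₂)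
    (hN₁ : 0 < N₁) (hN₂ : 0 < N₂) :
    (fun h : ℝ => fplus μ θ₁ θ₂ N₁ N₂ h x - fminus μ θ₁ θ₂ N₁ N₂ h x
        - μ * h * (((θ₁ + θ₂) * x - θ₁) * x * (1 - x) - (N₁ + N₂) * x + N₁))
      =O[nhdsWithin 0 (Set.Ioi 0)] (fun h : ℝ => h ^ 2) :=
  net_drift_weak_effects_expansion_general μ θ₁ θ₂ N₁ N₂ x
end

section
/- Phase transition of the invariant measure in the symmetric weak-effects case: let θ₁ = θ₂ = θ̄ ≥ 0 and N₁ = N₂ = N̄ > 1, and let w(x) = exp(−θ̄x(1−x))·(x(1−x))^{N̄−1} on (0,1). If θ̄ > 4(N̄−1), then x = 1/2 is a strict local minimum of w (the invariant density is bimodal near the center), while if θ̄ < 4(N̄−1), then x = 1/2 is a strict local maximum of w (the invariant density is unimodal near the center). -/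
/-!
Writing `w(x) = g(x(1 - x))` with `g(y) = exp(-θy) y^(N-1)`, the map `x ↦ x(1 - x)` sends a
punctured neighbourhood of `1/2` into a left neighbourhood of `1/4`, and
`g'(1/4) = g(1/4) (4(N - 1) - θ)`. So the sign of `4(N - 1) - θ` decides whether `g`, hence `w`,
is smaller or larger near the centre than at it.
-/

open Filter

/-- Unnormalized invariant density of the weak-effects limit in the symmetric
case `θ₁ = θ₂ = θ̄`, `N₁ = N₂ = N̄`: `w(x) = exp(−θ̄x(1−x))·(x(1−x))^{N̄−1}`. -/
noncomputable def wsym (θ N x : ℝ) : ℝ :=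
  Real.exp (-θ * (x * (1 - x))) * (x * (1 - x)) ^ (N - 1)

open Topology

theorem HasDerivAt.eventually_nhdsLT_lt_of_pos {f : ℝ → ℝ} {f' a : ℝ} (hf : HasDerivAt f f' a)
    (hf' : 0 < f') : ∀ᶠ y in 𝓝[<] a, f y < f a := by
  have hslope : ∀ᶠ y in 𝓝[<] a, 0 < slope f a y :=
    (hasDerivAt_iff_tendsto_slope_left_right.mp hf).1.eventually (lt_mem_nhds hf')
  filter_upwards [hslope, self_mem_nhdsWithin] with y hy hya
  exact (slope_pos_iff_gt hya).mp hy

theorem HasDerivAt.eventually_nhdsLT_gt_of_neg {f : ℝ → ℝ} {f' a : ℝ} (hf : HasDerivAt f f' a)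
    (hf' : f' < 0) : ∀ᶠ y in 𝓝[<] a, f a < f y := by
  filter_upwards [hf.neg.eventually_nhdsLT_lt_of_pos (neg_pos.mpr hf')] with y hy
  exact neg_lt_neg_iff.mp hy

theorem tendsto_mul_one_sub_nhdsNE_half :
    Tendsto (fun x : ℝ ↦ x * (1 - x)) (𝓝[≠] (1 / 2)) (𝓝[<] (1 / 4)) := by
  refine tendsto_nhdsWithin_of_tendsto_nhds_of_eventually_within _ ?_ ?_
  · have hcont : Continuous fun x : ℝ ↦ x * (1 - x) := by fun_prop
    convert (hcont.tendsto (1 / 2)).mono_left nhdsWithin_le_nhds using 2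
    norm_num
  · filter_upwards [self_mem_nhdsWithin] with x (hx : x ≠ 1 / 2)
    show x * (1 - x) < 1 / 4
    nlinarith [sq_pos_of_ne_zero (sub_ne_zero.mpr hx)]

noncomputable def wsymProfile (θ N y : ℝ) : ℝ :=
  Real.exp (-θ * y) * y ^ (N - 1)

theorem wsym_eq_wsymProfile (θ N x : ℝ) : wsym θ N x = wsymProfile θ N (x * (1 - x)) := rfl

theorem wsymProfile_pos (θ N : ℝ) {y : ℝ} (hy : 0 < y) : 0 < wsymProfile θ N y := by
  unfold wsymProfile; positivity

theorem hasDerivAt_wsymProfile (θ N : ℝ) {y : ℝ} (hy : 0 < y) :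
    HasDerivAt (wsymProfile θ N) (wsymProfile θ N y * ((N - 1) / y - θ)) y := by
  have hexp : HasDerivAt (fun y ↦ Real.exp (-θ * y)) (Real.exp (-θ * y) * -θ) y := by
    simpa using ((hasDerivAt_id y).const_mul (-θ)).exp
  refine (hexp.mul (Real.hasDerivAt_rpow_const (Or.inl hy.ne'))).congr_deriv ?_
  rw [wsymProfile, Real.rpow_sub_one hy.ne' (N - 1)]
  field_simp
  ring

theorem hasDerivAt_wsymProfile_quarter (θ N : ℝ) :
    HasDerivAt (wsymProfile θ N) (wsymProfile θ N (1 / 4) * (4 * (N - 1) - θ)) (1 / 4) := by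
  convert hasDerivAt_wsymProfile θ N (y := 1 / 4) (by norm_num) using 2
  ring

theorem wsym_half (θ N : ℝ) : wsym θ N (1 / 2) = wsymProfile θ N (1 / 4) := by
  norm_num [wsym_eq_wsymProfile]

theorem invariant_density_phase_transition_general (θ N : ℝ) :
    (θ > 4 * (N - 1) →
      ∀ᶠ x in nhdsWithin (1 / 2 : ℝ) {(1 / 2 : ℝ)}ᶜ, wsym θ N (1 / 2) < wsym θ N x) ∧
    (θ < 4 * (N - 1) →
      ∀ᶠ x in nhdsWithin (1 / 2 : ℝ) {(1 / 2 : ℝ)}ᶜ, wsym θ N x < wsym θ N (1 / 2)) := by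
  have hg := wsymProfile_pos θ N (y := 1 / 4) (by norm_num)
  have hd := hasDerivAt_wsymProfile_quarter θ N
  rw [wsym_half]
  refine ⟨fun h ↦ ?_, fun h ↦ ?_⟩
  · exact tendsto_mul_one_sub_nhdsNE_half.eventually
      (hd.eventually_nhdsLT_gt_of_neg (mul_neg_of_pos_of_neg hg (by linarith)))
  · exact tendsto_mul_one_sub_nhdsNE_half.eventually
      (hd.eventually_nhdsLT_lt_of_pos (mul_pos hg (by linarith)))

/-- Phase transition of the invariant measure in the symmetric weak-effects
case (`θ̄ ≥ 0`, `N̄ > 1`): if `θ̄ > 4(N̄−1)` then `x = 1/2` is a strict local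
minimum of the invariant density (bimodality near the center), while if
`θ̄ < 4(N̄−1)` then `x = 1/2` is a strict local maximum (unimodality near the
center). -/
theorem invariant_density_phase_transition (θ N : ℝ) (hθ : 0 ≤ θ) (hN : 1 < N) :
    (θ > 4 * (N - 1) →
      ∀ᶠ x in nhdsWithin (1 / 2 : ℝ) {(1 / 2 : ℝ)}ᶜ, wsym θ N (1 / 2) < wsym θ N x) ∧
    (θ < 4 * (N - 1) →
      ∀ᶠ x in nhdsWithin (1 / 2 : ℝ) {(1 / 2 : ℝ)}ᶜ, wsym θ N x < wsym θ N (1 / 2)) :=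
  invariant_density_phase_transition_general θ N
end
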